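/- arXiv:2411.01820 — 5 statements merged into one kernel-verified Lean document; each statement's English description precedes it below -/
import Mathlib

section
/- Let Σ be a symmetric positive definite p×p matrix whose eigenvalues satisfy λ₁ ≥ ⋯ ≥ λ_k > λ_{k+1} = ⋯ = λ_p, and let δ ∈ ℝ^p. Define the total covariance Σ_tot = Σ + ρ δ δᵀ for some ρ > 0, and let R₁ be a p×(k+1) matrix whose columns are orthonormal eigenvectors of Σ_tot corresponding to its top k+1 eigenvalues, and R₂ a p×(p−k−1) matrix whose columns are orthonormal eigenvectors corresponding to the remaining eigenvalues. Then R₂ᵀ Σ⁻¹ δ = 0; i.e., the vector β = Σ⁻¹ δ lies in the span of the columns of R₁. -/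
/-!
Let `λ = λ_{k+1} = ⋯ = λ_p` be the bulk eigenvalue of `Σ`, which is also its smallest one, and
let `r_j` be the columns of `R`. Since `Σ_tot = Σ + ρ δ δᵀ` and `Σ ⪰ λ`, every eigenvalue of
`Σ_tot` satisfies `μ_j ≥ λ + ρ ⟨δ, r_j⟩²`. On the vectors orthogonal to the top `k` eigenvectors
of `Σ` and to `δ`, a subspace of codimension at most `k + 1`, `Σ_tot` acts as `λ`; this subspace
therefore meets the span of `r_1, …, r_{k+2}`, which forces `μ_{k+2} ≤ λ`. Hence `μ_j = λ` for
`j > k + 1`, so `⟨δ, r_j⟩ = 0` and `r_j` is a `λ`-eigenvector of `Σ`, whence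
`⟨r_j, Σ⁻¹ δ⟩ = λ⁻¹ ⟨r_j, δ⟩ = 0`.
-/

open Matrix

namespace Matrix

variable {ι ν κ K : Type*} [Fintype ι] [Field K]

theorem exists_ne_zero_mulVec_eq_zero_of_card_lt [Fintype ν] [Fintype κ] (M : Matrix κ ν K)
    (h : Fintype.card κ < Fintype.card ν) : ∃ z ≠ 0, M *ᵥ z = 0 := by
  obtain ⟨z, hz, hz0⟩ := Submodule.exists_mem_ne_zero_of_ne_bot
    (LinearMap.ker_ne_bot_of_finrank_lt (f := M.mulVecLin) (by simpa using h))
  exact ⟨z, hz0, hz⟩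

theorem exists_eq_of_mulVec_eq_smul_on_ker [Fintype ν] [Fintype κ] [DecidableEq ν]
    {A : Matrix ι ι K} {r : Matrix ι ν K} {μ : ν → K} (hr : rᵀ * r = 1)
    (hA : rᵀ * A * r = diagonal μ) (V : Matrix κ ι K) {c : K}
    (hV : ∀ x, V *ᵥ x = 0 → A *ᵥ x = c • x) (hcard : Fintype.card κ < Fintype.card ν) :
    ∃ b, μ b = c := by
  obtain ⟨z, hz0, hz⟩ := exists_ne_zero_mulVec_eq_zero_of_card_lt (V * r) hcard
  have hAx : A *ᵥ (r *ᵥ z) = c • (r *ᵥ z) := hV _ (by rwa [mulVec_mulVec])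
  have hμz : diagonal μ *ᵥ z = c • z := by
    rw [← hA, ← mulVec_mulVec, ← mulVec_mulVec, hAx, mulVec_smul, mulVec_mulVec, hr,
      one_mulVec]
  obtain ⟨b, hb⟩ := Function.ne_iff.mp hz0
  refine ⟨b, mul_right_cancel₀ hb ?_⟩
  simpa [mulVec_diagonal] using congrFun hμz b

theorem transpose_submatrix_mul_mul_submatrix {o : Type*} (R : Matrix ι ν K) (A : Matrix ι ι K)
    (e : o → ν) : (R.submatrix id e)ᵀ * A * R.submatrix id e = (Rᵀ * A * R).submatrix e e := by
  rw [submatrix_mul _ _ _ id _ Function.bijective_id,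
    submatrix_mul _ _ _ id _ Function.bijective_id, submatrix_id_id, transpose_submatrix]

theorem apply_le_of_mulVec_eq_smul_on_ker [Fintype κ] [Preorder K] {p m : ℕ} (hm : m < p)
    {A R : Matrix (Fin p) (Fin p) K} {μ : Fin p → K} (hR : Rᵀ * R = 1)
    (hA : Rᵀ * A * R = diagonal μ) (hμ : Antitone μ) (V : Matrix κ (Fin p) K)
    (hκ : Fintype.card κ ≤ m) {c : K} (hV : ∀ x, V *ᵥ x = 0 → A *ᵥ x = c • x) :
    μ ⟨m, hm⟩ ≤ c := by
  let e := Fin.castLEEmb (Nat.succ_le_of_lt hm)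
  obtain ⟨b, hb⟩ := exists_eq_of_mulVec_eq_smul_on_ker (r := R.submatrix id e)
    (by rw [← Matrix.mul_one (_ᵀ), transpose_submatrix_mul_mul_submatrix, Matrix.mul_one, hR,
      submatrix_one_embedding])
    (by rw [transpose_submatrix_mul_mul_submatrix, hA, submatrix_diagonal_embedding]) V hV
    (by simpa using Nat.lt_succ_of_le hκ)
  rw [← hb]
  exact hμ (Fin.mk_le_mk.mpr (Nat.lt_succ_iff.mp b.isLt))

theorem add_smul_vecMulVec_mulVec {S : Matrix ι ι K} (ρ : K) (δ x : ι → K) :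
    (S + ρ • vecMulVec δ δ) *ᵥ x = S *ᵥ x + (ρ * (δ ⬝ᵥ x)) • δ := by
  rw [add_mulVec, smul_mulVec, vecMulVec_mulVec, op_smul_eq_smul, smul_smul]

theorem dotProduct_add_smul_vecMulVec_mulVec_self {S : Matrix ι ι K} (ρ : K) (δ x : ι → K) :
    x ⬝ᵥ ((S + ρ • vecMulVec δ δ) *ᵥ x) = x ⬝ᵥ (S *ᵥ x) + ρ * (δ ⬝ᵥ x) ^ 2 := by
  rw [add_smul_vecMulVec_mulVec, dotProduct_add, dotProduct_smul, smul_eq_mul,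
    dotProduct_comm x δ]
  ring

theorem dotProduct_inv_mulVec_eq_zero_of_mulVec_eq_smul [DecidableEq ι] {S : Matrix ι ι K}
    (hS : S.IsSymm) (hdet : IsUnit S.det) {v w : ι → K} {c : K} (hv : S *ᵥ v = c • v)
    (hvw : v ⬝ᵥ w = 0) : v ⬝ᵥ (S⁻¹ *ᵥ w) = 0 := by
  have hv' : v = c • (S⁻¹ *ᵥ v) := by
    rw [← mulVec_smul, ← hv, mulVec_mulVec, nonsing_inv_mul S hdet, one_mulVec]
  rw [dotProduct_mulVec, ← mulVec_transpose, transpose_nonsing_inv, hS.eq]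
  rcases eq_or_ne c 0 with rfl | hc
  · rw [hv', zero_smul, mulVec_zero, zero_dotProduct]
  · rw [← inv_smul_eq_iff₀ hc] at hv'
    rw [← hv', smul_dotProduct, hvw, smul_zero]

section OrthogonalDiagonalization

variable [DecidableEq ι] {Q S : Matrix ι ι ℝ} {lam : ι → ℝ}

theorem eq_mul_diagonal_mul_transpose (hQ : Q * Qᵀ = 1) (h : Qᵀ * S * Q = diagonal lam) :
    S = Q * diagonal lam * Qᵀ := by
  rw [← h, ← Matrix.mul_assoc, ← Matrix.mul_assoc, hQ, Matrix.one_mul, Matrix.mul_assoc, hQ,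
    Matrix.mul_one]

theorem mulVec_transpose_apply_eq_smul (hQ : Q * Qᵀ = 1) (h : Qᵀ * S * Q = diagonal lam)
    (j : ι) : S *ᵥ Qᵀ j = lam j • Qᵀ j := by
  have hcol : S * Q = Q * diagonal lam := by
    rw [← h, ← Matrix.mul_assoc, ← Matrix.mul_assoc, hQ, Matrix.one_mul]
  ext i
  have hij := congrFun (congrFun hcol i) j
  rw [mul_apply', mul_diagonal] at hij
  exact hij.trans (mul_comm _ _)

theorem mulVec_eq_smul_of_transpose_mulVec_eq_zero (hQ : Q * Qᵀ = 1)
    (h : Qᵀ * S * Q = diagonal lam) {c : ℝ} {x : ι → ℝ}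
    (hx : ∀ i, lam i ≠ c → (Qᵀ *ᵥ x) i = 0) : S *ᵥ x = c • x := by
  have hdiag : diagonal lam *ᵥ (Qᵀ *ᵥ x) = c • (Qᵀ *ᵥ x) := by
    ext i
    by_cases hi : lam i = c
    · simp [mulVec_diagonal, hi]
    · simp [mulVec_diagonal, hx i hi]
  rw [eq_mul_diagonal_mul_transpose hQ h, ← mulVec_mulVec, ← mulVec_mulVec, hdiag, mulVec_smul,
    mulVec_mulVec, hQ, one_mulVec]

theorem mul_dotProduct_self_le_dotProduct_mulVec (hQ : Q * Qᵀ = 1)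
    (h : Qᵀ * S * Q = diagonal lam) {c : ℝ} (hc : ∀ i, c ≤ lam i) (x : ι → ℝ) :
    c * (x ⬝ᵥ x) ≤ x ⬝ᵥ (S *ᵥ x) := by
  set y := Qᵀ *ᵥ x
  have hdot : ∀ w, x ⬝ᵥ (Q *ᵥ w) = y ⬝ᵥ w := fun w => by
    rw [dotProduct_mulVec, ← mulVec_transpose]
  have hxx : x ⬝ᵥ x = y ⬝ᵥ y := by
    rw [← hdot y, mulVec_mulVec, hQ, one_mulVec]
  rw [eq_mul_diagonal_mul_transpose hQ h, ← mulVec_mulVec, ← mulVec_mulVec, hdot, hxx,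
    dotProduct, dotProduct, Finset.mul_sum]
  refine Finset.sum_le_sum fun i _ => ?_
  rw [mulVec_diagonal]
  nlinarith [hc i, mul_self_nonneg (y i)]

theorem le_eigenvalue_add_smul_vecMulVec (hQ : Q * Qᵀ = 1) (h : Qᵀ * S * Q = diagonal lam)
    {c : ℝ} (hc : ∀ i, c ≤ lam i) (ρ : ℝ) (δ : ι → ℝ) {R : Matrix ι ι ℝ} {μ : ι → ℝ}
    (hR1 : Rᵀ * R = 1) (hR2 : R * Rᵀ = 1)
    (hdiagR : Rᵀ * (S + ρ • vecMulVec δ δ) * R = diagonal μ) (j : ι) :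
    c + ρ * (δ ⬝ᵥ Rᵀ j) ^ 2 ≤ μ j := by
  have hnorm : Rᵀ j ⬝ᵥ Rᵀ j = 1 := by
    have hjj := congrFun (congrFun hR1 j) j
    rwa [mul_apply', one_apply_eq] at hjj
  have hray := congrArg (Rᵀ j ⬝ᵥ ·) (mulVec_transpose_apply_eq_smul hR2 hdiagR j)
  simp only [dotProduct_add_smul_vecMulVec_mulVec_self, dotProduct_smul, hnorm,
    smul_eq_mul, mul_one] at hray
  have hS := mul_dotProduct_self_le_dotProduct_mulVec hQ h hc (Rᵀ j)
  rw [hnorm, mul_one] at hS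
  linarith

end OrthogonalDiagonalization

theorem eigenvalue_add_smul_vecMulVec_le_of_spike {p k : ℕ} (hkp : k + 1 < p)
    {Q S R : Matrix (Fin p) (Fin p) ℝ} {lam μ : Fin p → ℝ} (hQ : Q * Qᵀ = 1)
    (hdiagQ : Qᵀ * S * Q = diagonal lam) {c : ℝ} (hspike : ∀ i : Fin p, k ≤ (i : ℕ) → lam i = c)
    (ρ : ℝ) (δ : Fin p → ℝ) (hR : Rᵀ * R = 1)
    (hdiagR : Rᵀ * (S + ρ • vecMulVec δ δ) * R = diagonal μ) (hμ : Antitone μ) :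
    μ ⟨k + 1, hkp⟩ ≤ c := by
  refine apply_le_of_mulVec_eq_smul_on_ker hkp hR hdiagR hμ
    (fromRows (Qᵀ.submatrix (Fin.castLE (by omega : k ≤ p)) id) (replicateRow Unit δ))
    (by simp) fun x hx => ?_
  have hQx (i : Fin p) (hi : lam i ≠ c) : (Qᵀ *ᵥ x) i = 0 := by
    have hik : (i : ℕ) < k := by
      by_contra! hik
      exact hi (hspike i hik)
    exact congrFun hx (Sum.inl ⟨i, hik⟩)
  have hδx : δ ⬝ᵥ x = 0 := congrFun hx (Sum.inr ())
  rw [add_smul_vecMulVec_mulVec, hδx, mul_zero, zero_smul, add_zero,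
    mulVec_eq_smul_of_transpose_mulVec_eq_zero hQ hdiagQ hQx]

end Matrix

theorem stmt_0_general {p k : ℕ} (hkp : k + 1 < p)
    (S : Matrix (Fin p) (Fin p) ℝ) (hsymm : S.IsSymm) (hpd : S.PosDef)
    (lam : Fin p → ℝ) (Q : Matrix (Fin p) (Fin p) ℝ)
    (hQ2 : Q * Qᵀ = 1)
    (hdiagQ : Qᵀ * S * Q = Matrix.diagonal lam)
    (hspike : ∀ i j : Fin p, k ≤ (i : ℕ) → k ≤ (j : ℕ) → lam i = lam j)
    (hgap : ∀ i j : Fin p, (i : ℕ) < k → k ≤ (j : ℕ) → lam j < lam i)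
    (δ : Fin p → ℝ) (ρ : ℝ) (hρ : 0 < ρ)
    (μ : Fin p → ℝ) (R : Matrix (Fin p) (Fin p) ℝ)
    (hR1 : Rᵀ * R = 1) (hR2 : R * Rᵀ = 1)
    (hdiagR : Rᵀ * (S + ρ • vecMulVec δ δ) * R = Matrix.diagonal μ)
    (hμ_mono : Antitone μ) :
    ∀ j : Fin p, k + 1 ≤ (j : ℕ) → (Rᵀ *ᵥ (S⁻¹ *ᵥ δ)) j = 0 := by
  have hk : k < p := by omega
  set lam0 := lam ⟨k, hk⟩
  have hlam_ge (i : Fin p) : lam0 ≤ lam i := by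
    rcases lt_or_ge (i : ℕ) k with hi | hi
    · exact (hgap i _ hi le_rfl).le
    · exact (hspike _ i le_rfl hi).le
  have hμ_ge := le_eigenvalue_add_smul_vecMulVec hQ2 hdiagQ hlam_ge ρ δ hR1 hR2 hdiagR
  have hμ_le := eigenvalue_add_smul_vecMulVec_le_of_spike hkp hQ2 hdiagQ
    (fun i hi => hspike i ⟨k, hk⟩ hi le_rfl) ρ δ hR1 hdiagR hμ_mono
  intro j hj
  have hμj : μ j = lam0 := le_antisymm ((hμ_mono (Fin.mk_le_mk.mpr hj)).trans hμ_le)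
    (le_of_add_le_of_nonneg_left (hμ_ge j) (by positivity))
  have hδr : δ ⬝ᵥ Rᵀ j = 0 := by
    have hsq : (δ ⬝ᵥ Rᵀ j) ^ 2 = 0 := by nlinarith [hμ_ge j, sq_nonneg (δ ⬝ᵥ Rᵀ j)]
    exact pow_eq_zero_iff two_ne_zero |>.mp hsq
  have hSr : S *ᵥ Rᵀ j = lam0 • Rᵀ j := by
    have hcol := mulVec_transpose_apply_eq_smul hR2 hdiagR j
    rwa [add_smul_vecMulVec_mulVec, hδr, mul_zero, zero_smul, add_zero, hμj] at hcol
  exact dotProduct_inv_mulVec_eq_zero_of_mulVec_eq_smul hsymm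
    ((isUnit_iff_isUnit_det S).mp hpd.isUnit) hSr ((dotProduct_comm _ _).trans hδr)

/-- Theorem 1 of the paper (static version): for a spiked covariance `Σ`, the normal
vector `β = Σ⁻¹ δ` lies in the span of the top `k+1` eigenvectors of the total
covariance `Σ_tot = Σ + ρ δ δᵀ`, i.e. `R₂ᵀ β = 0`. Here the eigendecompositions are
encoded by orthogonal matrices `Q`, `R` and eigenvalue vectors sorted in descending
order. The columns of `R` with index `≥ k+1` form `R₂`. -/
theorem stmt_0 {p k : ℕ} (hkp : k + 1 < p)
    (S : Matrix (Fin p) (Fin p) ℝ) (hsymm : S.IsSymm) (hpd : S.PosDef)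
    (lam : Fin p → ℝ) (Q : Matrix (Fin p) (Fin p) ℝ)
    (hQ1 : Qᵀ * Q = 1) (hQ2 : Q * Qᵀ = 1)
    (hdiagQ : Qᵀ * S * Q = Matrix.diagonal lam)
    (hlam_mono : Antitone lam)
    (hspike : ∀ i j : Fin p, k ≤ (i : ℕ) → k ≤ (j : ℕ) → lam i = lam j)
    (hgap : ∀ i j : Fin p, (i : ℕ) < k → k ≤ (j : ℕ) → lam j < lam i)
    (δ : Fin p → ℝ) (ρ : ℝ) (hρ : 0 < ρ)
    (μ : Fin p → ℝ) (R : Matrix (Fin p) (Fin p) ℝ)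
    (hR1 : Rᵀ * R = 1) (hR2 : R * Rᵀ = 1)
    (hdiagR : Rᵀ * (S + ρ • vecMulVec δ δ) * R = Matrix.diagonal μ)
    (hμ_mono : Antitone μ) :
    ∀ j : Fin p, k + 1 ≤ (j : ℕ) → (Rᵀ *ᵥ (S⁻¹ *ᵥ δ)) j = 0 :=
  stmt_0_general hkp S hsymm hpd lam Q hQ2 hdiagQ hspike hgap δ ρ hρ μ R hR1 hR2 hdiagR hμ_mono
end

section
/- Let L be a p×k matrix, δ ∈ ℝ^p nonzero, ρ > 0, σ ∈ ℝ, and set Σ_tot = L Lᵀ + σ² I + ρ δ δᵀ. Suppose the angle φ between δ and the column space of L satisfies sin²(φ) ≥ C_φ > 0, and that rank(L) = k so the span W₁ of the columns of L together with δ has dimension k+1. Let Δ_k² = λ_min(Lᵀ L) (the smallest of λᵢ(Σ) − σ², i ≤ k) and m² = ρ‖δ‖². Then for every unit vector v ∈ W₁, vᵀ (L Lᵀ + ρ δ δᵀ) v ≥ (C_φ/2)·min(Δ_k², m²). -/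
/-!
Let `y` be the orthogonal projection of `δ` onto the column space `K` of `L` and `z = δ - y`, so
that `‖z‖² = sin²φ ‖δ‖² ≥ C_φ ‖δ‖²`. A unit vector `v ∈ K + ℝδ` splits as `v = u + t z` with
`u ∈ K`. Since `Lᵀ z = 0`, the quadratic form equals `‖Lᵀ u‖² + ρ ⟨δ, v⟩²`, and
`‖Lᵀ u‖² ≥ Δ_k² ‖u‖²` because `(LᵀL)² ≥ λ_min(LᵀL) · LᵀL`. Cauchy–Schwarz for `⟨y, u⟩` gives
`‖z‖² ≤ 2 (‖u‖² ‖δ‖² + ⟨δ, v⟩²)`, hence the form is at least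
`min(Δ_k², m²) (‖u‖² + ⟨δ, v⟩² / ‖δ‖²) ≥ (C_φ / 2) min(Δ_k², m²)`.
-/

open Matrix

open scoped MatrixOrder in
theorem Matrix.PosSemidef.iInf_eigenvalues_mul_dotProduct_mulVec_le {n : Type*} [Fintype n]
    [DecidableEq n] {A : Matrix n n ℝ} (hA : A.PosSemidef) (c : n → ℝ) :
    (⨅ i, hA.1.eigenvalues i) * (c ⬝ᵥ (A *ᵥ c)) ≤ (A *ᵥ c) ⬝ᵥ (A *ᵥ c) := by
  set μ := ⨅ i, hA.1.eigenvalues i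
  -- discharges the side conditions of the `cfc` lemmas below
  have hsa : IsSelfAdjoint A := hA.1
  have hpos : (A * (A - μ • 1)).PosSemidef := by
    have hcfc : A * (A - μ • 1) = cfc (fun x : ℝ => x * (x - μ)) A := by
      rw [cfc_mul _ _ A, cfc_sub _ _ A, cfc_id' ℝ A, cfc_const μ A, Algebra.algebraMap_eq_smul_one]
    rw [← Matrix.nonneg_iff_posSemidef, hcfc]
    refine cfc_nonneg fun x hx => ?_
    obtain ⟨i, rfl⟩ := hA.1.spectrum_real_eq_range_eigenvalues ▸ hx
    exact mul_nonneg (hA.eigenvalues_nonneg i) (sub_nonneg.2 (ciInf_le (Finite.bddBelow_range _) i))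
  have hsymm : c ᵥ* A = A *ᵥ c := by
    rw [← mulVec_transpose, ← conjTranspose_eq_transpose_of_trivial, hA.1.eq]
  have hnonneg := hpos.dotProduct_mulVec_nonneg c
  rw [star_trivial, ← mulVec_mulVec, sub_mulVec, smul_mulVec, one_mulVec, dotProduct_mulVec, hsymm,
    dotProduct_sub, dotProduct_smul, smul_eq_mul, dotProduct_comm (A *ᵥ c) c] at hnonneg
  linarith

theorem Submodule.exists_mem_forall_dotProduct_sub_eq_zero {ι : Type*} [Fintype ι]
    (K : Submodule ℝ (ι → ℝ)) (x : ι → ℝ) : ∃ y ∈ K, ∀ w ∈ K, w ⬝ᵥ (x - y) = 0 := by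
  let e : (ι → ℝ) ≃ₗ[ℝ] EuclideanSpace ℝ ι := (WithLp.linearEquiv 2 ℝ (ι → ℝ)).symm
  obtain ⟨_, ⟨y, hy, rfl⟩, z, hz, hsum⟩ := (K.map e.toLinearMap).exists_add_mem_mem_orthogonal (e x)
  refine ⟨y, hy, fun w hw => ?_⟩
  have hz' : z = e (x - y) := by rw [map_sub, hsum, LinearEquiv.coe_coe, add_sub_cancel_left]
  have horth := (Submodule.mem_orthogonal _ z).1 hz (e w) ⟨w, hw, rfl⟩
  rwa [hz', EuclideanSpace.inner_eq_star_dotProduct, star_trivial, dotProduct_comm] at horth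

theorem dotProduct_self_le_two_mul_add_sq {ι : Type*} [Fintype ι] {y z u : ι → ℝ} (t : ℝ)
    (hyz : y ⬝ᵥ z = 0) (huz : u ⬝ᵥ z = 0) (hv : (u + t • z) ⬝ᵥ (u + t • z) = 1) :
    z ⬝ᵥ z ≤ 2 * ((u ⬝ᵥ u) * ((y + z) ⬝ᵥ (y + z)) + ((y + z) ⬝ᵥ (u + t • z)) ^ 2) := by
  have hCS : (y ⬝ᵥ u) ^ 2 ≤ (y ⬝ᵥ y) * (u ⬝ᵥ u) := by
    simpa only [dotProduct, sq] using Finset.sum_mul_sq_le_sq_mul_sq Finset.univ y u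
  have hzz : 0 ≤ z ⬝ᵥ z := dotProduct_self_star_nonneg z
  have huu : 0 ≤ u ⬝ᵥ u := dotProduct_self_star_nonneg u
  simp only [add_dotProduct, dotProduct_add, smul_dotProduct, dotProduct_smul, smul_eq_mul,
    dotProduct_comm z y, dotProduct_comm z u, hyz, huz] at hv ⊢
  -- `2a² + 2(a + b)² - b² = (2a + b)²` with `a = ⟨y, u⟩`, `b = t ‖z‖²`
  nlinarith [sq_nonneg (2 * (y ⬝ᵥ u) + t * (z ⬝ᵥ z)), mul_nonneg huu hzz]

theorem dotProduct_mulVec_mul_transpose_add_smul_vecMulVec {m n : Type*} [Fintype m] [Fintype n]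
    (L : Matrix m n ℝ) (ρ : ℝ) (δ v : m → ℝ) :
    v ⬝ᵥ ((L * Lᵀ + ρ • vecMulVec δ δ) *ᵥ v) = (Lᵀ *ᵥ v) ⬝ᵥ (Lᵀ *ᵥ v) + ρ * (δ ⬝ᵥ v) ^ 2 := by
  rw [add_mulVec, dotProduct_add, ← mulVec_mulVec, dotProduct_mulVec, ← mulVec_transpose,
    smul_mulVec, vecMulVec_mulVec, dotProduct_smul, dotProduct_smul, dotProduct_comm v δ]
  simp only [smul_eq_mul, op_smul_eq_mul]; ring

theorem iInf_eigenvalues_mul_dotProduct_self_le {m n : Type*} [Fintype m] [Fintype n]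
    [DecidableEq n] (L : Matrix m n ℝ) (hL : (Lᵀ * L).IsHermitian) {u : m → ℝ}
    (hu : u ∈ LinearMap.range L.mulVecLin) :
    (⨅ i, hL.eigenvalues i) * (u ⬝ᵥ u) ≤ (Lᵀ *ᵥ u) ⬝ᵥ (Lᵀ *ᵥ u) := by
  obtain ⟨c, rfl⟩ := hu
  have hPSD : (Lᵀ * L).PosSemidef := by
    simpa only [conjTranspose_eq_transpose_of_trivial] using posSemidef_conjTranspose_mul_self L
  have key := hPSD.iInf_eigenvalues_mul_dotProduct_mulVec_le c
  rwa [← mulVec_mulVec, dotProduct_mulVec, vecMul_transpose] at key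

theorem div_two_mul_min_le_add_mul_sq {C Δ ρ d A W q : ℝ} (hd : 0 < d) (hΔ : 0 ≤ Δ) (hρ : 0 ≤ ρ)
    (hA : 0 ≤ A) (hW : Δ * A ≤ W) (h : C * d ≤ 2 * (A * d + q ^ 2)) :
    C / 2 * min Δ (ρ * d) ≤ W + ρ * q ^ 2 := by
  set M := min Δ (ρ * d)
  have hM : 0 ≤ M := le_min hΔ (mul_nonneg hρ hd.le)
  have hMΔ : M * A ≤ Δ * A := mul_le_mul_of_nonneg_right (min_le_left _ _) hA
  have hMρ : M * q ^ 2 ≤ ρ * d * q ^ 2 :=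
    mul_le_mul_of_nonneg_right (min_le_right _ _) (sq_nonneg q)
  have : C / 2 * M * d ≤ (W + ρ * q ^ 2) * d := by nlinarith [mul_le_mul_of_nonneg_left h hM]
  exact le_of_mul_le_mul_right this hd

/-- Key inequality in Lemma S.5: for every unit vector `v` in the subspace `W₁`
spanned by the columns of `L` together with `δ`, one has
`vᵀ (L Lᵀ + ρ δ δᵀ) v ≥ (C_φ/2) min(Δ_k², m²)`, where `Δ_k²` is the smallest
eigenvalue of `LᵀL`, `m² = ρ‖δ‖²`, and `sin²φ ≥ C_φ` with `φ` the angle between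
`δ` and the column space of `L` (encoded as `‖δ − w‖² ≥ C_φ ‖δ‖²` for every `w`
in the column space). -/
theorem stmt_3 {p k : ℕ}
    (L : Matrix (Fin p) (Fin k) ℝ) (δ : Fin p → ℝ) (hδ : δ ≠ 0)
    (ρ Cφ : ℝ) (hρ : 0 < ρ)
    (hangle : ∀ w ∈ Submodule.span ℝ (Set.range fun j : Fin k => fun i => L i j),
      Cφ * (δ ⬝ᵥ δ) ≤ (δ - w) ⬝ᵥ (δ - w))
    (Δsq : ℝ)
    (hΔsq : Δsq = ⨅ i, (show (Lᵀ * L).IsHermitian by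
      simpa [Matrix.conjTranspose_eq_transpose_of_trivial] using
        Matrix.isHermitian_conjTranspose_mul_self L).eigenvalues i) :
    ∀ v : Fin p → ℝ,
      v ∈ Submodule.span ℝ (insert δ (Set.range fun j : Fin k => fun i => L i j)) →
      v ⬝ᵥ v = 1 →
      Cφ / 2 * min Δsq (ρ * (δ ⬝ᵥ δ)) ≤ v ⬝ᵥ ((L * Lᵀ + ρ • vecMulVec δ δ) *ᵥ v) := by
  intro v hv hv1
  set K := Submodule.span ℝ (Set.range fun j : Fin k => fun i => L i j)
  have hK : K = LinearMap.range L.mulVecLin := (range_mulVecLin L).symm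
  obtain ⟨y, hyK, hy⟩ := K.exists_mem_forall_dotProduct_sub_eq_zero δ
  obtain ⟨t, u₀, hu₀, rfl⟩ := Submodule.mem_span_insert.1 hv
  set z := δ - y
  set u := u₀ + t • y
  have hv : t • δ + u₀ = u + t • z := by module
  have huK : u ∈ K := K.add_mem hu₀ (K.smul_mem t hyK)
  have hLz : Lᵀ *ᵥ z = 0 := by
    ext j
    simpa [mulVec, dotProduct] using hy _ (Submodule.subset_span ⟨j, rfl⟩)
  have hΔ : 0 ≤ Δsq := hΔsq ▸ Real.iInf_nonneg fun i =>
    (posSemidef_conjTranspose_mul_self L).eigenvalues_nonneg i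
  rw [dotProduct_mulVec_mul_transpose_add_smul_vecMulVec, hv]
  refine div_two_mul_min_le_add_mul_sq (dotProduct_self_star_pos_iff.2 hδ) hΔ hρ.le
    (dotProduct_self_star_nonneg u) ?_ ?_
  · rw [mulVec_add, mulVec_smul, hLz, smul_zero, add_zero, hΔsq]
    exact iInf_eigenvalues_mul_dotProduct_self_le L _ (hK ▸ huK)
  · have hδyz : δ = y + z := (add_sub_cancel y δ).symm
    rw [hv] at hv1
    have hz := dotProduct_self_le_two_mul_add_sq t (hy y hyK) (hy u huK) hv1
    rw [← hδyz] at hz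
    exact (hangle y hyK).trans hz
end

section
/- Under the setup of the previous statement, the symmetric matrix Σ_tot = L Lᵀ + σ² I + ρ δ δᵀ satisfies λ_{k+1}(Σ_tot) − λ_{k+2}(Σ_tot) ≥ (C_φ/2)·min(Δ_k², m²), where λ_j denotes the j-th largest eigenvalue. -/
/-!
Write `Σ_tot = A + σ² I` with `A = L Lᵀ + ρ δ δᵀ`, so that `A` has eigenvalues `ν i = μ i - σ²`.
The range of `A` lies in `W₁ = span (δ, columns of L)`, of dimension `k + 1`, so `A` has at most
`k + 1` positive eigenvalues and `ν (k + 1) ≤ 0`. On the other hand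
`vᵀ A v = ‖Lᵀ v‖² + ρ (δ ⬝ᵥ v)² ≥ (C_φ / 2) min(Δ², ρ ‖δ‖²) ‖v‖²` on `W₁`: split
`v = u + a δ⊥` with `u` in the column space of `L` and `δ⊥` the component of `δ` orthogonal to it,
and use `‖Lᵀ u‖² ≥ Δ² ‖u‖²`, `‖δ⊥‖² ≥ C_φ ‖δ‖²` and Cauchy–Schwarz. As `W₁` has dimension `k + 1`,
the Courant–Fischer principle turns this into the lower bound on `ν k`.
-/

open Matrix

section Diagonalization

variable {n : Type*} [Fintype n] [DecidableEq n] {S R : Matrix n n ℝ} {μ : n → ℝ}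

lemma dotProduct_mulVec_mulVec_of_transpose_mul_self (hR : Rᵀ * R = 1) (x y : n → ℝ) :
    (R *ᵥ x) ⬝ᵥ (R *ᵥ y) = x ⬝ᵥ y := by
  rw [dotProduct_mulVec, ← mulVec_transpose, mulVec_mulVec, hR, one_mulVec]

lemma transpose_mul_mul_eq_diagonal_of_add_smul_one (hR : Rᵀ * R = 1) {s : ℝ}
    (h : Rᵀ * (S + s • 1) * R = diagonal μ) : Rᵀ * S * R = diagonal fun i => μ i - s := by
  rw [Matrix.mul_add, Matrix.add_mul, Matrix.mul_smul, Matrix.mul_one, Matrix.smul_mul, hR,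
    ← eq_sub_iff_add_eq] at h
  ext i j
  rcases eq_or_ne i j with rfl | hij <;> simp [*]

lemma mulVec_mulVec_of_transpose_mul_mul_eq_diagonal (hR : R * Rᵀ = 1)
    (h : Rᵀ * S * R = diagonal μ) (x : n → ℝ) : S *ᵥ (R *ᵥ x) = R *ᵥ (μ * x) := by
  have hSR : S * R = R * diagonal μ := by
    rw [← h, ← Matrix.mul_assoc, ← Matrix.mul_assoc, hR, Matrix.one_mul]
  have hdiag : diagonal μ *ᵥ x = μ * x := funext fun i => mulVec_diagonal μ x i
  rw [mulVec_mulVec, hSR, ← mulVec_mulVec, hdiag]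

lemma dotProduct_mulVec_of_transpose_mul_mul_eq_diagonal (hR1 : Rᵀ * R = 1) (hR2 : R * Rᵀ = 1)
    (h : Rᵀ * S * R = diagonal μ) (x : n → ℝ) :
    (R *ᵥ x) ⬝ᵥ (S *ᵥ (R *ᵥ x)) = ∑ i, μ i * x i ^ 2 := by
  rw [mulVec_mulVec_of_transpose_mul_mul_eq_diagonal hR2 h,
    dotProduct_mulVec_mulVec_of_transpose_mul_self hR1]
  exact Finset.sum_congr rfl fun i _ => by simp only [Pi.mul_apply]; ring

lemma mulVec_col_of_transpose_mul_mul_eq_diagonal (hR : R * Rᵀ = 1)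
    (h : Rᵀ * S * R = diagonal μ) (i : n) : S *ᵥ R.col i = μ i • R.col i := by
  rw [← mulVec_single_one, mulVec_mulVec_of_transpose_mul_mul_eq_diagonal hR h, ← mulVec_smul]
  congr 1
  ext j
  rcases eq_or_ne j i with rfl | hj <;> simp [*]

end Diagonalization

lemma exists_mem_ne_zero_apply_eq_zero_of_finrank_lt {K V V₂ : Type*} [Field K]
    [AddCommGroup V] [Module K V] [AddCommGroup V₂] [Module K V₂] [FiniteDimensional K V₂]
    (f : V →ₗ[K] V₂) {W : Submodule K V} [FiniteDimensional K W]
    (hW : Module.finrank K V₂ < Module.finrank K W) : ∃ v ∈ W, v ≠ 0 ∧ f v = 0 := by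
  obtain ⟨⟨v, hvW⟩, hv, hv0⟩ := Submodule.exists_mem_ne_zero_of_ne_bot
    (LinearMap.ker_ne_bot_of_finrank_lt (f := f.domRestrict W) hW)
  exact ⟨v, hvW, fun h => hv0 (Subtype.ext h), hv⟩

section OrderedEigenvalues

variable {p : ℕ} {A R : Matrix (Fin p) (Fin p) ℝ} {ν : Fin p → ℝ}

lemma sum_mul_sq_le_of_forall_lt_eq_zero (hν : Antitone ν) {j : ℕ} (hj : j < p) {x : Fin p → ℝ}
    (hx : ∀ i : Fin p, (i : ℕ) < j → x i = 0) :
    ∑ i, ν i * x i ^ 2 ≤ ν ⟨j, hj⟩ * ∑ i, x i ^ 2 := by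
  rw [Finset.mul_sum]
  refine Finset.sum_le_sum fun i _ => ?_
  rcases lt_or_ge (i : ℕ) j with hi | hi
  · simp [hx i hi]
  · exact mul_le_mul_of_nonneg_right (hν (Fin.le_def.mpr hi)) (sq_nonneg _)

lemma le_eigenvalue_of_le_dotProduct_mulVec (hR1 : Rᵀ * R = 1) (hR2 : R * Rᵀ = 1)
    (hA : Rᵀ * A * R = diagonal ν) (hν : Antitone ν) {j : ℕ} (hj : j < p)
    {W : Submodule ℝ (Fin p → ℝ)} (hW : j < Module.finrank ℝ W) {c : ℝ}
    (hc : ∀ v ∈ W, c * (v ⬝ᵥ v) ≤ v ⬝ᵥ (A *ᵥ v)) : c ≤ ν ⟨j, hj⟩ := by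
  -- a nonzero `v ∈ W` whose first `j` coordinates in the eigenbasis vanish
  obtain ⟨v, hvW, hv0, hvx⟩ := exists_mem_ne_zero_apply_eq_zero_of_finrank_lt
    (LinearMap.funLeft ℝ ℝ (Fin.castLE hj.le) ∘ₗ Rᵀ.mulVecLin) (by simpa using hW)
  set x := Rᵀ *ᵥ v
  have hv : v = R *ᵥ x := by rw [mulVec_mulVec, hR2, one_mulVec]
  have hx : ∀ i : Fin p, (i : ℕ) < j → x i = 0 := fun i hi => congrFun hvx ⟨i, hi⟩
  have hnorm : v ⬝ᵥ v = ∑ i, x i ^ 2 := by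
    rw [hv, dotProduct_mulVec_mulVec_of_transpose_mul_self hR1]
    simp only [dotProduct, sq]
  have hquad : v ⬝ᵥ (A *ᵥ v) ≤ ν ⟨j, hj⟩ * (v ⬝ᵥ v) := by
    rw [hnorm, hv, dotProduct_mulVec_of_transpose_mul_mul_eq_diagonal hR1 hR2 hA]
    exact sum_mul_sq_le_of_forall_lt_eq_zero hν hj hx
  have hpos : 0 < v ⬝ᵥ v := dotProduct_self_star_pos_iff.mpr hv0
  exact le_of_mul_le_mul_right ((hc v hvW).trans hquad) hpos

lemma eigenvalue_nonpos_of_rank_le (hR2 : R * Rᵀ = 1)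
    (hA : Rᵀ * A * R = diagonal ν) (hν : Antitone ν) {j : ℕ} (hj : j < p) (hrank : A.rank ≤ j) :
    ν ⟨j, hj⟩ ≤ 0 := by
  by_contra! hpos
  let b : Fin (j + 1) → Fin p → ℝ := fun t => R.col (Fin.castLE hj t)
  have hb : LinearIndependent ℝ b :=
    (linearIndependent_cols_iff_isUnit.mpr (IsUnit.of_mul_eq_one _ hR2)).comp _
      (Fin.castLE_injective hj)
  have hbA : ∀ t, b t ∈ LinearMap.range A.mulVecLin := fun t => by
    have hνt : 0 < ν (Fin.castLE hj t) :=
      hpos.trans_le (hν (Fin.le_def.mpr (by simp only [Fin.val_castLE]; omega)))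
    refine ⟨(ν (Fin.castLE hj t))⁻¹ • b t, ?_⟩
    rw [mulVecLin_apply, mulVec_smul,
      mulVec_col_of_transpose_mul_mul_eq_diagonal hR2 hA, inv_smul_smul₀ hνt.ne']
  have hle := Submodule.finrank_mono (Submodule.span_le.mpr (Set.range_subset_iff.mpr hbA))
  rw [finrank_span_eq_card hb, Fintype.card_fin] at hle
  have : Module.finrank ℝ (LinearMap.range A.mulVecLin) ≤ j := hrank
  omega

end OrderedEigenvalues

section ColumnSpace

variable {m n : Type*} [Fintype m] [Fintype n] (L : Matrix m n ℝ)

lemma exists_transpose_mulVec_sub_mulVec_eq_zero (δ : m → ℝ) :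
    ∃ y, Lᵀ *ᵥ (δ - L *ᵥ y) = 0 := by
  have hrange : LinearMap.range (Lᵀ * L).mulVecLin = LinearMap.range Lᵀ.mulVecLin := by
    refine Submodule.eq_of_le_of_finrank_eq ?_ ?_
    · rintro _ ⟨y, rfl⟩
      exact ⟨L *ᵥ y, mulVec_mulVec y Lᵀ L⟩
    · change (Lᵀ * L).rank = Lᵀ.rank
      rw [rank_transpose_mul_self, rank_transpose]
  obtain ⟨y, hy⟩ : Lᵀ *ᵥ δ ∈ LinearMap.range (Lᵀ * L).mulVecLin := hrange ▸ ⟨δ, rfl⟩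
  refine ⟨y, ?_⟩
  rw [mulVecLin_apply] at hy
  rw [mulVec_sub, mulVec_mulVec, hy, sub_self]

lemma iInf_eigenvalues_mul_dotProduct_le [DecidableEq n] (y : n → ℝ) :
    (⨅ i, (isHermitian_conjTranspose_mul_self L).eigenvalues i) * ((L *ᵥ y) ⬝ᵥ (L *ᵥ y)) ≤
      (Lᵀ *ᵥ (L *ᵥ y)) ⬝ᵥ (Lᵀ *ᵥ (L *ᵥ y)) := by
  set hG := isHermitian_conjTranspose_mul_self L
  set U : Matrix n n ℝ := ↑hG.eigenvectorUnitary
  have hU1 : Uᵀ * U = 1 := Unitary.coe_star_mul_self hG.eigenvectorUnitary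
  have hU2 : U * Uᵀ = 1 := Unitary.coe_mul_star_self hG.eigenvectorUnitary
  have hdiag : Uᵀ * (Lᵀ * L) * U = diagonal hG.eigenvalues := by
    have h := hG.conjStarAlgAut_star_eigenvectorUnitary
    rw [Unitary.conjStarAlgAut_star_apply] at h
    simp only [RCLike.ofReal_real_eq_id, Function.id_comp, star_eq_conjTranspose,
      conjTranspose_eq_transpose_of_trivial] at h
    exact h
  set e := hG.eigenvalues
  set x := Uᵀ *ᵥ y
  have hy : y = U *ᵥ x := by rw [mulVec_mulVec, hU2, one_mulVec]
  have hLy : (L *ᵥ y) ⬝ᵥ (L *ᵥ y) = ∑ i, e i * x i ^ 2 := by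
    rw [← dotProduct_transpose_mulVec, mulVec_mulVec, hy,
      dotProduct_mulVec_of_transpose_mul_mul_eq_diagonal hU1 hU2 hdiag]
  have hGy : (Lᵀ *ᵥ (L *ᵥ y)) ⬝ᵥ (Lᵀ *ᵥ (L *ᵥ y)) = ∑ i, (e i * x i) ^ 2 := by
    rw [mulVec_mulVec, hy, mulVec_mulVec_of_transpose_mul_mul_eq_diagonal hU2 hdiag,
      dotProduct_mulVec_mulVec_of_transpose_mul_self hU1]
    simp only [dotProduct, Pi.mul_apply, sq]
  rw [hLy, hGy, Finset.mul_sum]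
  refine Finset.sum_le_sum fun i _ => ?_
  have he : 0 ≤ e i := eigenvalues_conjTranspose_mul_self_nonneg L i
  have hΔ : ⨅ j, e j ≤ e i := ciInf_le (Finite.bddBelow_range _) i
  nlinarith [mul_le_mul_of_nonneg_right hΔ (mul_nonneg he (sq_nonneg (x i)))]

end ColumnSpace

lemma half_mul_le_add_sq {D E U s a Cφ : ℝ} (hE : 0 ≤ E) (hCE : Cφ * D ≤ E) (hU : 0 ≤ U)
    (hs : s ^ 2 ≤ (D - E) * U) :
    Cφ / 2 * D * (U + a ^ 2 * E) ≤ D * U + (s + a * E) ^ 2 := by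
  -- `Cφ D ≤ E` bounds the left side by `E (U + a² E) / 2`, and `(s + aE)² - (aE)² / 2 ≥ -s²`
  nlinarith [sq_nonneg (a * E + 2 * s), mul_le_mul_of_nonneg_right hCE hU,
    mul_le_mul_of_nonneg_right hCE (mul_nonneg (sq_nonneg a) hE)]

lemma half_mul_min_le {D E U s a ρ Cφ Δ : ℝ} (hE : 0 ≤ E) (hCE : Cφ * D ≤ E) (hED : E ≤ D)
    (hU : 0 ≤ U) (hs : s ^ 2 ≤ (D - E) * U) (hΔ : 0 ≤ Δ) (hρ : 0 ≤ ρ) :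
    Cφ / 2 * min Δ (ρ * D) * (U + a ^ 2 * E) ≤ Δ * U + ρ * (s + a * E) ^ 2 := by
  set M := min Δ (ρ * D)
  have hM : 0 ≤ M := le_min hΔ (mul_nonneg hρ (hE.trans hED))
  rcases (hE.trans hED).eq_or_lt with hD | hD
  · have hM0 : M = 0 := le_antisymm ((min_le_right Δ (ρ * D)).trans_eq (by rw [← hD, mul_zero])) hM
    rw [hM0, mul_zero, zero_mul]
    positivity
  refine le_of_mul_le_mul_left ?_ hD
  calc D * (Cφ / 2 * M * (U + a ^ 2 * E))
      = M * (Cφ / 2 * D * (U + a ^ 2 * E)) := by ring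
    _ ≤ M * (D * U + (s + a * E) ^ 2) :=
      mul_le_mul_of_nonneg_left (half_mul_le_add_sq hE hCE hU hs) hM
    _ = D * (M * U) + M * (s + a * E) ^ 2 := by ring
    _ ≤ D * (Δ * U) + ρ * D * (s + a * E) ^ 2 := by
      gcongr
      · exact min_le_left _ _
      · exact min_le_right _ _
    _ = D * (Δ * U + ρ * (s + a * E) ^ 2) := by ring

lemma sq_dotProduct_le {m : Type*} [Fintype m] (w u : m → ℝ) :
    (w ⬝ᵥ u) ^ 2 ≤ (w ⬝ᵥ w) * (u ⬝ᵥ u) := by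
  simpa only [dotProduct, sq] using Finset.sum_mul_sq_le_sq_mul_sq Finset.univ w u

lemma add_smul_dotProduct_add_smul_of_dotProduct_eq_zero {m : Type*} [Fintype m]
    {w u e : m → ℝ} (hw : e ⬝ᵥ w = 0) (hu : e ⬝ᵥ u = 0) (b a : ℝ) :
    (w + b • e) ⬝ᵥ (u + a • e) = w ⬝ᵥ u + b * a * (e ⬝ᵥ e) := by
  simp only [add_dotProduct, dotProduct_add, smul_dotProduct, dotProduct_smul, smul_eq_mul, hu,
    dotProduct_comm w e, hw]
  ring

lemma half_mul_min_mul_dotProduct_le {m n : Type*} [Fintype m] [Fintype n] [DecidableEq n]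
    (L : Matrix m n ℝ) {δ : m → ℝ} {ρ Cφ : ℝ} (hρ : 0 ≤ ρ)
    (hangle : ∀ y, Cφ * (δ ⬝ᵥ δ) ≤ (δ - L *ᵥ y) ⬝ᵥ (δ - L *ᵥ y)) (a : ℝ) (y : n → ℝ) :
    Cφ / 2 * min (⨅ i, (isHermitian_conjTranspose_mul_self L).eigenvalues i) (ρ * (δ ⬝ᵥ δ)) *
        ((a • δ + L *ᵥ y) ⬝ᵥ (a • δ + L *ᵥ y)) ≤
      (Lᵀ *ᵥ (a • δ + L *ᵥ y)) ⬝ᵥ (Lᵀ *ᵥ (a • δ + L *ᵥ y)) +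
        ρ * (δ ⬝ᵥ (a • δ + L *ᵥ y)) ^ 2 := by
  obtain ⟨y₀, hy₀⟩ := exists_transpose_mulVec_sub_mulVec_eq_zero L δ
  set w := L *ᵥ y₀
  set δp := δ - w
  set u := L *ᵥ (y + a • y₀)
  have horth : ∀ z, δp ⬝ᵥ (L *ᵥ z) = 0 := fun z => by
    rw [← dotProduct_transpose_mulVec, hy₀, dotProduct_zero]
  have hu : δp ⬝ᵥ u = 0 := horth _
  have hw : δp ⬝ᵥ w = 0 := horth _
  have hv : a • δ + L *ᵥ y = u + a • δp := by
    simp only [u, δp, w, mulVec_add, mulVec_smul]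
    module
  have hδ : δ = w + δp := (add_sub_cancel w δ).symm
  have hnorm : (u + a • δp) ⬝ᵥ (u + a • δp) = u ⬝ᵥ u + a ^ 2 * (δp ⬝ᵥ δp) := by
    rw [add_smul_dotProduct_add_smul_of_dotProduct_eq_zero hu hu, sq]
  have hLv : Lᵀ *ᵥ (u + a • δp) = Lᵀ *ᵥ u := by
    rw [mulVec_add, mulVec_smul, hy₀, smul_zero, add_zero]
  have hδv : δ ⬝ᵥ (u + a • δp) = w ⬝ᵥ u + a * (δp ⬝ᵥ δp) := by
    simpa [← hδ] using add_smul_dotProduct_add_smul_of_dotProduct_eq_zero hw hu 1 a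
  have hD : δ ⬝ᵥ δ = w ⬝ᵥ w + δp ⬝ᵥ δp := by
    simpa [← hδ] using add_smul_dotProduct_add_smul_of_dotProduct_eq_zero hw hw 1 1
  have hE : Cφ * (δ ⬝ᵥ δ) ≤ δp ⬝ᵥ δp := hangle y₀
  have hΔ : 0 ≤ ⨅ i, (isHermitian_conjTranspose_mul_self L).eigenvalues i :=
    Real.iInf_nonneg (eigenvalues_conjTranspose_mul_self_nonneg L)
  have hs : (w ⬝ᵥ u) ^ 2 ≤ (δ ⬝ᵥ δ - δp ⬝ᵥ δp) * (u ⬝ᵥ u) := by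
    rw [hD, add_sub_cancel_right]
    exact sq_dotProduct_le w u
  rw [hv, hnorm, hLv, hδv]
  calc _ ≤ (⨅ i, (isHermitian_conjTranspose_mul_self L).eigenvalues i) * (u ⬝ᵥ u) +
          ρ * (w ⬝ᵥ u + a * (δp ⬝ᵥ δp)) ^ 2 :=
        half_mul_min_le (dotProduct_self_star_nonneg δp) hE
          (hD ▸ le_add_of_nonneg_left (dotProduct_self_star_nonneg w))
          (dotProduct_self_star_nonneg u) hs hΔ hρ
    _ ≤ _ := by gcongr; exact iInf_eigenvalues_mul_dotProduct_le L _

section Covariance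

variable {m n : Type*} [Fintype m] [Fintype n] (L : Matrix m n ℝ) (δ : m → ℝ) (ρ : ℝ)

lemma mulVec_add_smul_vecMulVec (x : m → ℝ) :
    (L * Lᵀ + ρ • vecMulVec δ δ) *ᵥ x = L *ᵥ (Lᵀ *ᵥ x) + (ρ * (δ ⬝ᵥ x)) • δ := by
  rw [add_mulVec, ← mulVec_mulVec, smul_mulVec, vecMulVec_mulVec, op_smul_eq_smul, smul_smul]

lemma dotProduct_mulVec_add_smul_vecMulVec (x : m → ℝ) :
    x ⬝ᵥ ((L * Lᵀ + ρ • vecMulVec δ δ) *ᵥ x) = (Lᵀ *ᵥ x) ⬝ᵥ (Lᵀ *ᵥ x) + ρ * (δ ⬝ᵥ x) ^ 2 := by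
  rw [mulVec_add_smul_vecMulVec, dotProduct_add, dotProduct_smul, ← dotProduct_transpose_mulVec,
    dotProduct_comm x δ, smul_eq_mul]
  ring

end Covariance

lemma span_cols_eq_range_mulVecLin {m n : Type*} [Fintype n] (L : Matrix m n ℝ) :
    Submodule.span ℝ (Set.range fun j => fun i => L i j) = LinearMap.range L.mulVecLin :=
  (range_mulVecLin L).symm

lemma mem_span_insert_cols_iff {m n : Type*} [Fintype n] (L : Matrix m n ℝ) (δ v : m → ℝ) :
    v ∈ Submodule.span ℝ (insert δ (Set.range fun j => fun i => L i j)) ↔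
      ∃ (a : ℝ) (y : n → ℝ), v = a • δ + L *ᵥ y := by
  simp [Submodule.mem_span_insert, span_cols_eq_range_mulVecLin]

/-- Lemma S.5: the eigengap of `Σ_tot = L Lᵀ + σ² I + ρ δ δᵀ` between its
`(k+1)`-st and `(k+2)`-nd largest eigenvalues is at least `(C_φ/2) min(Δ_k², m²)`.
The eigenvalues `μ` (in descending order) are encoded via an orthogonal
diagonalization; with 0-based indexing the gap is `μ k − μ (k+1)`. -/
theorem stmt_4 {p k : ℕ} (hp : k + 2 ≤ p)
    (L : Matrix (Fin p) (Fin k) ℝ) (δ : Fin p → ℝ)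
    (ρ Cφ σ : ℝ) (hρ : 0 < ρ)
    (hdim : Module.finrank ℝ
        (Submodule.span ℝ (insert δ (Set.range fun j : Fin k => fun i => L i j))
          : Submodule ℝ (Fin p → ℝ)) = k + 1)
    (hangle : ∀ w ∈ Submodule.span ℝ (Set.range fun j : Fin k => fun i => L i j),
      Cφ * (δ ⬝ᵥ δ) ≤ (δ - w) ⬝ᵥ (δ - w))
    (Δsq : ℝ)
    (hΔsq : Δsq = ⨅ i, (Matrix.isHermitian_conjTranspose_mul_self L).eigenvalues i)
    (μ : Fin p → ℝ) (R : Matrix (Fin p) (Fin p) ℝ)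
    (hR1 : Rᵀ * R = 1) (hR2 : R * Rᵀ = 1)
    (hdiag : Rᵀ * (L * Lᵀ + σ ^ 2 • (1 : Matrix (Fin p) (Fin p) ℝ)
        + ρ • vecMulVec δ δ) * R = Matrix.diagonal μ)
    (hμ_mono : Antitone μ) :
    Cφ / 2 * min Δsq (ρ * (δ ⬝ᵥ δ)) ≤
      μ ⟨k, by omega⟩ - μ ⟨k + 1, by omega⟩ := by
  set A := L * Lᵀ + ρ • vecMulVec δ δ
  have hA : Rᵀ * A * R = diagonal fun i => μ i - σ ^ 2 :=
    transpose_mul_mul_eq_diagonal_of_add_smul_one hR1 (by rwa [add_right_comm] at hdiag)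
  have hν : Antitone fun i => μ i - σ ^ 2 := fun i j hij => sub_le_sub_right (hμ_mono hij) _
  have hrank : A.rank ≤ k + 1 := hdim ▸ Submodule.finrank_mono (by
    rintro _ ⟨x, rfl⟩
    rw [mulVecLin_apply, mulVec_add_smul_vecMulVec, mem_span_insert_cols_iff, add_comm]
    exact ⟨_, _, rfl⟩)
  have hquad : ∀ v ∈ Submodule.span ℝ (insert δ (Set.range fun j : Fin k => fun i => L i j)),
      Cφ / 2 * min Δsq (ρ * (δ ⬝ᵥ δ)) * (v ⬝ᵥ v) ≤ v ⬝ᵥ (A *ᵥ v) := fun v hv => by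
    obtain ⟨a, y, rfl⟩ := (mem_span_insert_cols_iff L δ v).mp hv
    rw [dotProduct_mulVec_add_smul_vecMulVec, hΔsq]
    refine half_mul_min_mul_dotProduct_le L hρ.le (fun y => hangle _ ?_) a y
    exact span_cols_eq_range_mulVecLin L ▸ LinearMap.mem_range_self _ y
  have hupper := eigenvalue_nonpos_of_rank_le hR2 hA hν (by omega) hrank
  have hlower := le_eigenvalue_of_le_dotProduct_mulVec hR1 hR2 hA hν (j := k) (by omega)
    (by omega) hquad
  linarith
end

section
/- For any angles φ ∈ (0, π/2] and ψ ∈ [0, φ), and positive reals Δ², ρ̃ with sin²(φ) ≥ C_φ > 0, it holds that sin²(ψ)·Δ² + cos²(π/2 − φ + ψ)·ρ̃ ≥ C_φ · Δ² ρ̃ / (Δ² + ρ̃) ≥ (C_φ/2)·min(Δ², ρ̃). -/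
open Real

theorem stmt_5 (φ ψ Δsq ρ' Cφ : ℝ)
    (hφ0 : 0 < φ) (hφ1 : φ ≤ π / 2) (hψ0 : 0 ≤ ψ) (hψφ : ψ < φ)
    (hΔ : 0 < Δsq) (hρ : 0 < ρ') (hC : 0 < Cφ) (hsin : Cφ ≤ Real.sin φ ^ 2) :
    Cφ * Δsq * ρ' / (Δsq + ρ') ≤
        Real.sin ψ ^ 2 * Δsq + Real.cos (π / 2 - φ + ψ) ^ 2 * ρ' ∧
      Cφ / 2 * min Δsq ρ' ≤ Cφ * Δsq * ρ' / (Δsq + ρ') := by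
  have hπ : 0 < π := Real.pi_pos
  have hsum : 0 < Δsq + ρ' := by linarith
  have hcos : Real.cos (π / 2 - φ + ψ) = Real.sin (φ - ψ) := by
    rw [show π / 2 - φ + ψ = π / 2 - (φ - ψ) by ring, Real.cos_pi_div_two_sub]
  have ha0 : 0 ≤ Real.sin ψ := Real.sin_nonneg_of_nonneg_of_le_pi hψ0 (by linarith)
  have hb0 : 0 ≤ Real.sin (φ - ψ) :=
    Real.sin_nonneg_of_nonneg_of_le_pi (by linarith) (by linarith)
  have hφsplit : Real.sin φ ≤ Real.sin ψ + Real.sin (φ - ψ) := by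
    have := Real.sin_add ψ (φ - ψ)
    have h1 : Real.cos (φ - ψ) ≤ 1 := Real.cos_le_one _
    have h2 : Real.cos ψ ≤ 1 := Real.cos_le_one _
    have h3 : Real.sin (ψ + (φ - ψ)) = Real.sin φ := by ring_nf
    nlinarith [Real.sin_nonneg_of_nonneg_of_le_pi hψ0 (by linarith : ψ ≤ π),
      Real.sin_nonneg_of_nonneg_of_le_pi (show (0:ℝ) ≤ φ - ψ by linarith) (by linarith)]
  have hsφ0 : 0 ≤ Real.sin φ := Real.sin_nonneg_of_nonneg_of_le_pi (le_of_lt hφ0) (by linarith)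
  constructor
  · rw [hcos, div_le_iff₀ hsum]
    set a := Real.sin ψ
    set b := Real.sin (φ - ψ)
    have h1 : Cφ * (Δsq * ρ') ≤ Real.sin φ ^ 2 * (Δsq * ρ') :=
      mul_le_mul_of_nonneg_right hsin (by positivity)
    have h2 : Real.sin φ ^ 2 ≤ (a + b) ^ 2 := by nlinarith
    have h3 : Real.sin φ ^ 2 * (Δsq * ρ') ≤ (a + b) ^ 2 * (Δsq * ρ') :=
      mul_le_mul_of_nonneg_right h2 (by positivity)
    have h4 : (a + b) ^ 2 * (Δsq * ρ') ≤ (a ^ 2 * Δsq + b ^ 2 * ρ') * (Δsq + ρ') := by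
      nlinarith [sq_nonneg (a * Δsq - b * ρ')]
    linarith
  · rw [le_div_iff₀ hsum]
    rcases le_total Δsq ρ' with h | h
    · rw [min_eq_left h]
      nlinarith [mul_nonneg (mul_nonneg hC.le hΔ.le) (sub_nonneg.2 h)]
    · rw [min_eq_right h]
      nlinarith [mul_nonneg (mul_nonneg hC.le hρ.le) (sub_nonneg.2 h)]
end

section
/- Let Q ~ χ²(d) (chi-squared with d degrees of freedom). Then for every x ≥ 0, P(Q ≥ d + 2√(d x) + 2x) ≤ exp(−x). -/
/-!
Chernoff bound with exponential tilting: multiplying the `Gamma(a, r)` density by `exp (s q)`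
gives `(r / (r - s)) ^ a` times the `Gamma(a, r - s)` density, so the moment generating function
is `(r / (r - s)) ^ a` and `P(Q ≥ t) ≤ exp (-s t) (r / (r - s)) ^ a` for `0 ≤ s < r`.
For `χ²(d) = Gamma(d/2, 1/2)` and `t = d + 2√(dx) + 2x`, write `x = d u²` and take
`s = u / (1 + 2u)`; then `r / (r - s) = 1 + 2u`, and `log w ≤ sinh (log w) = (w - w⁻¹) / 2`
for `w = 1 + 2u ≥ 1` turns the exponent into exactly `-x`.
-/

open MeasureTheory ProbabilityTheory Real

lemma ofReal_exp_mul_gammaPDF {a r s : ℝ} (hr : 0 ≤ r) (hs : s < r) (q : ℝ) :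
    ENNReal.ofReal (exp (s * q)) * gammaPDF a r q =
      ENNReal.ofReal ((r / (r - s)) ^ a) * gammaPDF a (r - s) q := by
  rcases lt_or_ge q 0 with hq | hq
  · simp only [gammaPDF_of_neg hq, mul_zero]
  have hrs : 0 < r - s := sub_pos.mpr hs
  have hpow : (r / (r - s)) ^ a * (r - s) ^ a = r ^ a := by
    rw [← mul_rpow (div_nonneg hr hrs.le) hrs.le, div_mul_cancel₀ _ hrs.ne']
  have hexp : exp (s * q) * exp (-(r * q)) = exp (-((r - s) * q)) := by
    rw [← exp_add]; ring_nf
  rw [gammaPDF_of_nonneg hq, gammaPDF_of_nonneg hq, ← ENNReal.ofReal_mul (exp_nonneg _),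
    ← ENNReal.ofReal_mul (by positivity), ← hpow, ← hexp]
  ring_nf

lemma lintegral_ofReal_exp_mul_gammaPDF {a r s : ℝ} (ha : 0 < a) (hr : 0 ≤ r) (hs : s < r) :
    ∫⁻ q, ENNReal.ofReal (exp (s * q)) * gammaPDF a r q = ENNReal.ofReal ((r / (r - s)) ^ a) := by
  simp_rw [ofReal_exp_mul_gammaPDF hr hs]
  rw [lintegral_const_mul' _ _ ENNReal.ofReal_ne_top,
    lintegral_gammaPDF_eq_one ha (sub_pos.mpr hs), mul_one]

lemma gammaMeasure_tail_le_exp_mul_rpow {a r s : ℝ} (ha : 0 < a) (hr : 0 ≤ r) (hs₀ : 0 ≤ s)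
    (hs : s < r) (t : ℝ) :
    gammaMeasure a r {q | t ≤ q} ≤ ENNReal.ofReal (exp (-(s * t)) * (r / (r - s)) ^ a) := by
  have hS : MeasurableSet {q : ℝ | t ≤ q} := measurableSet_Ici
  have hmarkov : ∀ q ∈ {q : ℝ | t ≤ q},
      gammaPDF a r q ≤ ENNReal.ofReal (exp (-(s * t))) * ENNReal.ofReal (exp (s * q)) *
        gammaPDF a r q := by
    intro q (hq : t ≤ q)
    refine le_mul_of_one_le_left zero_le ?_
    rw [← ENNReal.ofReal_mul (exp_nonneg _), ← exp_add, ENNReal.one_le_ofReal]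
    exact one_le_exp (by nlinarith)
  calc gammaMeasure a r {q | t ≤ q}
      = ∫⁻ q in {q | t ≤ q}, gammaPDF a r q := withDensity_apply _ hS
    _ ≤ ∫⁻ q in {q | t ≤ q}, ENNReal.ofReal (exp (-(s * t))) *
          ENNReal.ofReal (exp (s * q)) * gammaPDF a r q := setLIntegral_mono' hS hmarkov
    _ ≤ ∫⁻ q, ENNReal.ofReal (exp (-(s * t))) *
          (ENNReal.ofReal (exp (s * q)) * gammaPDF a r q) := by
      simp_rw [mul_assoc]; exact setLIntegral_le_lintegral _ _
    _ = ENNReal.ofReal (exp (-(s * t)) * (r / (r - s)) ^ a) := by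
      rw [lintegral_const_mul' _ _ ENNReal.ofReal_ne_top,
        lintegral_ofReal_exp_mul_gammaPDF ha hr hs, ← ENNReal.ofReal_mul (exp_nonneg _)]

lemma log_le_half_sub_inv {w : ℝ} (hw : 1 ≤ w) : log w ≤ (w - w⁻¹) / 2 := by
  rw [← sinh_log (by linarith)]
  exact self_le_sinh_iff.mpr (log_nonneg hw)

lemma gammaMeasure_chiSq_tail_le {d u : ℝ} (hd : 0 < d) (hu : 0 ≤ u) :
    gammaMeasure (d / 2) (1 / 2) {q | d + 2 * (d * u) + 2 * (d * u ^ 2) ≤ q} ≤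
      ENNReal.ofReal (exp (-(d * u ^ 2))) := by
  set w := 1 + 2 * u
  have hw : 1 ≤ w := by linarith
  have hs : u / w < 1 / 2 := by rw [div_lt_iff₀ (by linarith)]; linarith
  have hrate : 1 / 2 / (1 / 2 - u / w) = w := by field_simp; ring
  refine (gammaMeasure_tail_le_exp_mul_rpow (by positivity) (by norm_num) (by positivity) hs _).trans
    (ENNReal.ofReal_le_ofReal ?_)
  have hexponent : d / 2 * ((w - w⁻¹) / 2) - u / w * (d + 2 * (d * u) + 2 * (d * u ^ 2)) =
      -(d * u ^ 2) := by
    field_simp; ring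
  rw [hrate, rpow_def_of_pos (by linarith), ← exp_add, exp_le_exp]
  nlinarith [mul_le_mul_of_nonneg_left (log_le_half_sub_inv hw) (by positivity : 0 ≤ d / 2)]

/-- Laurent–Massart upper tail bound for `Q ~ χ²(d)` (i.e. `Gamma(d/2, 1/2)`):
`P(Q ≥ d + 2√(dx) + 2x) ≤ exp(−x)` for all `x ≥ 0`. -/
theorem stmt_9 (d : ℕ) (hd : 1 ≤ d) (x : ℝ) (hx : 0 ≤ x) :
    (gammaMeasure ((d : ℝ) / 2) (1 / 2))
        {q | (d : ℝ) + 2 * Real.sqrt (d * x) + 2 * x ≤ q} ≤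
      ENNReal.ofReal (Real.exp (-x)) := by
  have hd : (0 : ℝ) < d := by exact_mod_cast hd
  set u := √(x / d)
  have hx_eq : x = d * u ^ 2 := by
    rw [sq_sqrt (by positivity), mul_div_cancel₀ _ hd.ne']
  have hsqrt : √(d * x) = d * u := by
    rw [hx_eq, ← mul_assoc, ← sq, sqrt_mul (sq_nonneg _), sqrt_sq hd.le, sqrt_sq (sqrt_nonneg _)]
  rw [hsqrt, hx_eq]
  exact gammaMeasure_chiSq_tail_le hd (sqrt_nonneg _)
end
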